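/- arXiv:2110.07987 — 2 statements merged into one kernel-verified Lean document; each statement's English description precedes it below -/
import Mathlib

section
/- Let p and q be distinct primes both dividing the positive integer n, and let a = ord_p(n) ≥ 1 be the exact power of p dividing n. Then the product (X^{n/(pq)} − 1) · Φ_{n p^{−a}}(X^{p^{a−1}}) divides X^{n/p} − 1 in ℤ[X]. -/
open Polynomial

/-! Write `n = p ^ a * m` with `p ∤ m`. Then `q ∣ m`, and both sides arise by substituting
`X ^ p ^ (a - 1)` into `(X ^ (m / q) - 1) * Φ_m ∣ X ^ m - 1`, which holds because `m / q` is a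
proper divisor of `m`. -/

theorem X_pow_mul_sub_one_mul_cyclotomic_comp_X_pow_dvd (R : Type*) [CommRing R] (k : ℕ) {d m : ℕ}
    (hd : d ∈ m.properDivisors) :
    (X ^ (k * d) - 1) * (cyclotomic m R).comp (X ^ k) ∣ X ^ (k * m) - 1 := by
  simpa [← expand_eq_comp_X_pow, pow_mul] using
    map_dvd (expand R k) (X_pow_sub_one_mul_cyclotomic_dvd_X_pow_sub_one_of_dvd R hd)

theorem Nat.div_eq_pow_factorization_sub_one_mul_ordCompl {n p : ℕ} (hp : p.Prime) (hpn : p ∣ n)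
    (hn : n ≠ 0) : n / p = p ^ (n.factorization p - 1) * ordCompl[p] n := by
  have ha : 1 ≤ n.factorization p := hp.factorization_pos_of_dvd hn hpn
  conv_lhs => rw [← Nat.ordProj_mul_ordCompl_eq_self n p]
  rw [← Nat.sub_add_cancel ha, pow_succ, mul_comm _ p, mul_assoc,
    Nat.mul_div_cancel_left _ hp.pos, Nat.add_sub_cancel]

theorem stmt_6 (p q n : ℕ) (hp : p.Prime) (hq : q.Prime) (hpq : p ≠ q)
    (hn : 0 < n) (hpn : p ∣ n) (hqn : q ∣ n)
    (a : ℕ) (ha : a = n.factorization p) :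
    (X ^ (n / (p * q)) - 1) * (cyclotomic (n / p ^ a) ℤ).comp (X ^ p ^ (a - 1)) ∣
      X ^ (n / p) - 1 := by
  subst ha
  have hnp := Nat.div_eq_pow_factorization_sub_one_mul_ordCompl hp hpn hn.ne'
  have hqm : q ∣ ordCompl[p] n :=
    Nat.dvd_ordCompl_of_dvd_not_dvd hqn ((Nat.prime_dvd_prime_iff_eq hp hq).not.mpr hpq)
  have hproper : ordCompl[p] n / q ∈ (ordCompl[p] n).properDivisors :=
    Nat.mem_properDivisors.mpr ⟨Nat.div_dvd_of_dvd hqm,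
      Nat.div_lt_self (Nat.ordCompl_pos p hn.ne') hq.one_lt⟩
  rw [← Nat.div_div_eq_div_mul, hnp, Nat.mul_div_assoc _ hqm]
  exact X_pow_mul_sub_one_mul_cyclotomic_comp_X_pow_dvd ℤ _ hproper
end

section
/- Let a and b be positive integers and let d = gcd(a, b). Then, as ideals of ℤ[X], the principal ideal generated by X^d − 1 equals the ideal generated by X^a − 1 and X^b − 1: ⟨X^d − 1⟩ = ⟨X^a − 1, X^b − 1⟩. -/
open Polynomial

lemma stmt_7_dvd (d n : ℕ) (h : d ∣ n) : ((X : ℤ[X]) ^ d - 1) ∣ (X : ℤ[X]) ^ n - 1 := by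
  obtain ⟨k, rfl⟩ := h
  have := sub_dvd_pow_sub_pow ((X : ℤ[X]) ^ d) 1 k
  simpa [pow_mul] using this

lemma stmt_7_key : ∀ n a b : ℕ, a + b ≤ n → 0 < a → 0 < b →
    ((X : ℤ[X]) ^ Nat.gcd a b - 1) ∈
      Ideal.span {(X : ℤ[X]) ^ a - 1, (X : ℤ[X]) ^ b - 1} := by
  intro n
  induction n with
  | zero => intro a b h ha hb; omega
  | succ n ih =>
    intro a b h ha hb
    rcases lt_trichotomy a b with hab | rfl | hab
    · -- a < b, reduce to (a, b - a)
      have hd : Nat.gcd a b = Nat.gcd a (b - a) := by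
        rw [Nat.gcd_comm a (b - a), Nat.gcd_sub_self_left (le_of_lt hab), Nat.gcd_comm]
      rw [hd]
      have hmem1 : ((X : ℤ[X]) ^ (b - a) - 1) ∈
          Ideal.span {(X : ℤ[X]) ^ a - 1, (X : ℤ[X]) ^ b - 1} := by
        have heq : (X : ℤ[X]) ^ (b - a) - 1 =
            ((X : ℤ[X]) ^ b - 1) - X ^ (b - a) * ((X : ℤ[X]) ^ a - 1) := by
          have : b - a + a = b := by omega
          ring_nf
          rw [← pow_add, this]
          ring
        rw [heq]
        exact sub_mem (Ideal.subset_span (by simp))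
          (Ideal.mul_mem_left _ _ (Ideal.subset_span (by simp)))
      have hmem2 : ((X : ℤ[X]) ^ a - 1) ∈
          Ideal.span {(X : ℤ[X]) ^ a - 1, (X : ℤ[X]) ^ b - 1} :=
        Ideal.subset_span (by simp)
      have hsub : Ideal.span {(X : ℤ[X]) ^ a - 1, (X : ℤ[X]) ^ (b - a) - 1} ≤
          Ideal.span {(X : ℤ[X]) ^ a - 1, (X : ℤ[X]) ^ b - 1} := by
        rw [Ideal.span_le]
        rintro p (rfl | rfl) <;> simpa using by first | exact hmem1 | exact hmem2
      exact hsub (ih a (b - a) (by omega) ha (by omega))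
    · rw [Nat.gcd_self]
      exact Ideal.subset_span (by simp)
    · -- b < a, reduce to (a - b, b)
      have hd : Nat.gcd a b = Nat.gcd (a - b) b := (Nat.gcd_sub_self_left (le_of_lt hab)).symm
      rw [hd]
      have hmem1 : ((X : ℤ[X]) ^ (a - b) - 1) ∈
          Ideal.span {(X : ℤ[X]) ^ a - 1, (X : ℤ[X]) ^ b - 1} := by
        have heq : (X : ℤ[X]) ^ (a - b) - 1 =
            ((X : ℤ[X]) ^ a - 1) - X ^ (a - b) * ((X : ℤ[X]) ^ b - 1) := by
          have : a - b + b = a := by omega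
          ring_nf
          rw [← pow_add, this]
          ring
        rw [heq]
        exact sub_mem (Ideal.subset_span (by simp))
          (Ideal.mul_mem_left _ _ (Ideal.subset_span (by simp)))
      have hmem2 : ((X : ℤ[X]) ^ b - 1) ∈
          Ideal.span {(X : ℤ[X]) ^ a - 1, (X : ℤ[X]) ^ b - 1} :=
        Ideal.subset_span (by simp)
      have hsub : Ideal.span {(X : ℤ[X]) ^ (a - b) - 1, (X : ℤ[X]) ^ b - 1} ≤
          Ideal.span {(X : ℤ[X]) ^ a - 1, (X : ℤ[X]) ^ b - 1} := by
        rw [Ideal.span_le]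
        rintro p (rfl | rfl) <;> simpa using by first | exact hmem1 | exact hmem2
      exact hsub (ih (a - b) b (by omega) (by omega) hb)

theorem stmt_7 (a b : ℕ) (ha : 0 < a) (hb : 0 < b) :
    Ideal.span {(X : ℤ[X]) ^ Nat.gcd a b - 1} =
      Ideal.span {(X : ℤ[X]) ^ a - 1, (X : ℤ[X]) ^ b - 1} := by
  apply le_antisymm
  · rw [Ideal.span_le, Set.singleton_subset_iff]
    exact stmt_7_key (a + b) a b le_rfl ha hb
  · rw [Ideal.span_le]
    rintro p (rfl | rfl) <;>
      [exact Ideal.mem_span_singleton.2 (stmt_7_dvd _ _ (Nat.gcd_dvd_left a b));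
       exact Ideal.mem_span_singleton.2 (stmt_7_dvd _ _ (Nat.gcd_dvd_right a b))]
end
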